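/- Let A ∈ M_n(ℝ) with n odd. Then A is nonsingular with A^{-1} a bdsw Z-matrix and A < 0 entrywise (so A^{-1} is an N-matrix) if and only if A < 0 entrywise, A has the inverse cyclic property, and d - c > 0. -/

import Mathlib

open Matrix Finset

/-- A matrix (of order ≥ 2) has the *inverse cyclic property* if all its diagonal
entries are nonzero and the three cyclic entry conditions hold. -/
def InvCyclic {n : ℕ} (A : Matrix (Fin (n + 2)) (Fin (n + 2)) ℝ) : Prop :=
  (∀ i, A i i ≠ 0) ∧
  (∀ i k j : Fin (n + 2), i < k → k < j → A i j = A i k * A k j / A k k) ∧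
  (∀ i j : Fin (n + 2), j < i → i ≠ Fin.last (n + 1) →
    A i j = A i (Fin.last (n + 1)) * A (Fin.last (n + 1)) j /
      A (Fin.last (n + 1)) (Fin.last (n + 1))) ∧
  (∀ j : Fin (n + 2), j < Fin.last (n + 1) →
    A (Fin.last (n + 1)) j = A (Fin.last (n + 1)) 0 * A 0 j / A 0 0)

/-- `d`, the product of the diagonal entries. -/
def diagProd {n : ℕ} (A : Matrix (Fin (n + 2)) (Fin (n + 2)) ℝ) : ℝ := ∏ i, A i i

/-- `c`, the cyclic product `a₁₂a₂₃⋯a_{(n-1)n}a_{n1}`. -/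
def cycProd {n : ℕ} (A : Matrix (Fin (n + 2)) (Fin (n + 2)) ℝ) : ℝ :=
  ∏ i : Fin (n + 2), A i (i + 1)
/-- A *bi-diagonal south-west* (bdsw) matrix: the diagonal, the super diagonal and the
south-west corner entry are nonzero, and all other entries are zero. -/
def Bdsw {n : ℕ} (B : Matrix (Fin (n + 2)) (Fin (n + 2)) ℝ) : Prop :=
  (∀ i, B i i ≠ 0) ∧
  (∀ i j : Fin (n + 2), (j : ℕ) = (i : ℕ) + 1 → B i j ≠ 0) ∧
  (B (Fin.last (n + 1)) 0 ≠ 0) ∧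
  (∀ i j : Fin (n + 2), i ≠ j → (j : ℕ) ≠ (i : ℕ) + 1 →
    ¬(i = Fin.last (n + 1) ∧ j = 0) → B i j = 0)


/-!
Both sides are equivalent to a cyclic column recurrence: off the diagonal, column `j` of `A` is
a multiple of column `j - 1` (indices mod the order), `a_{ij} a_{j-1,j-1} = a_{i,j-1} a_{j-1,j}`.
A bdsw right inverse `B` forces it, because `(AB)_{ij} = a_{i,j-1} b_{j-1,j} + a_{ij} b_{jj}`;
conversely it is a reformulation of the inverse cyclic property. Running the recurrence once
around the cycle gives `a_{j,j-1} a_{j-1,j} d = c a_{jj} a_{j-1,j-1}`. Hence the bdsw matrix with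
`b_{jj} = d / ((d - c) a_{jj})` and `b_{j-1,j} = -d a_{j-1,j} / ((d - c) a_{j-1,j-1} a_{jj})`
inverts `A`, and any bdsw inverse satisfies `b_{jj} a_{jj} (d - c) = d`. There `d < 0` since the
order is odd, `a_{jj} < 0`, and `b_{jj} > 0` by the `(j - 1, j)` entry of `AB = 1`.
-/

open Fin.NatCast

lemma prod_neg_of_odd_card {ι R : Type*} [Fintype ι] [CommRing R] [LinearOrder R]
    [IsStrictOrderedRing R] {f : ι → R} (hodd : Odd (Fintype.card ι)) (hf : ∀ i, f i < 0) :
    ∏ i, f i < 0 := by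
  have hflip : ∏ i, -f i = -∏ i, f i := by
    rw [Finset.prod_neg, Finset.card_univ, hodd.neg_one_pow, neg_one_mul]
  have hpos : 0 < ∏ i, -f i := Finset.prod_pos fun i _ => neg_pos.mpr (hf i)
  linarith

section Cyclic

variable {n : ℕ}

lemma Fin.eq_sub_one_iff {k j : Fin (n + 2)} :
    k = j - 1 ↔ (j : ℕ) = k + 1 ∨ (k = Fin.last (n + 1) ∧ j = 0) := by
  rw [eq_sub_iff_add_eq]
  constructor
  · rintro rfl
    rw [Fin.val_add_one]
    split_ifs with h <;> simp [h]
  · rintro (h | ⟨rfl, rfl⟩)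
    · ext
      rw [Fin.val_add_one, if_neg, h]
      rintro rfl
      simp only [Fin.val_last] at h
      omega
    · simp

lemma Fin.add_natCast_ne_self (i : Fin (n + 2)) {m : ℕ} (h0 : 0 < m) (h : m < n + 2) :
    i + (m : Fin (n + 2)) ≠ i := by
  rw [Ne, add_eq_left, Fin.natCast_eq_zero]
  exact fun hdvd => absurd (Nat.le_of_dvd h0 hdvd) (by omega)

lemma Fin.sub_one_ne_self (j : Fin (n + 2)) : j - 1 ≠ j :=
  sub_eq_self.not.mpr one_ne_zero

lemma Fin.natCast_add_one_eq_neg_one : ((n + 1 : ℕ) : Fin (n + 2)) = -1 := by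
  rw [eq_neg_iff_add_eq_zero, ← Nat.cast_succ, Fin.natCast_self]

lemma Fin.neg_one_eq_last : (-1 : Fin (n + 2)) = Fin.last (n + 1) :=
  (eq_neg_iff_add_eq_zero.mpr (Fin.last_add_one _)).symm

lemma prod_range_add_left {M : Type*} [CommMonoid M] (f : Fin (n + 2) → M) (j : Fin (n + 2)) :
    ∏ l ∈ Finset.range (n + 2), f (j + l) = ∏ i, f i := by
  rw [← Fin.prod_univ_eq_prod_range (fun l => f (j + l))]
  simp only [Fin.cast_val_eq_self]
  exact Equiv.prod_comp (Equiv.addLeft j) f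

lemma bdsw_iff {B : Matrix (Fin (n + 2)) (Fin (n + 2)) ℝ} :
    Bdsw B ↔ (∀ i, B i i ≠ 0) ∧ (∀ j, B (j - 1) j ≠ 0) ∧
      ∀ k j, k ≠ j → k ≠ j - 1 → B k j = 0 := by
  constructor
  · rintro ⟨hdiag, hsuper, hcorner, hzero⟩
    refine ⟨hdiag, fun j => ?_, fun k j hkj hk => hzero k j hkj
      (fun h => hk (Fin.eq_sub_one_iff.mpr (Or.inl h)))
      (fun h => hk (Fin.eq_sub_one_iff.mpr (Or.inr h)))⟩
    rcases Fin.eq_sub_one_iff.mp (rfl : j - 1 = j - 1) with h | ⟨h, rfl⟩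
    · exact hsuper _ _ h
    · rwa [h]
  · rintro ⟨hdiag, hsub, hzero⟩
    refine ⟨hdiag, fun i j h => ?_, ?_, fun k j hkj h1 h2 => hzero k j hkj fun hk => ?_⟩
    · rw [Fin.eq_sub_one_iff.mpr (Or.inl h)]; exact hsub j
    · rw [Fin.eq_sub_one_iff.mpr (Or.inr ⟨rfl, rfl⟩)]; exact hsub 0
    · rcases Fin.eq_sub_one_iff.mp hk with h | h
      exacts [h1 h, h2 h]

lemma mul_apply_eq_of_col_support {R : Type*} [NonUnitalNonAssocSemiring R]
    (A B : Matrix (Fin (n + 2)) (Fin (n + 2)) R) (i j : Fin (n + 2))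
    (hB : ∀ k, k ≠ j → k ≠ j - 1 → B k j = 0) :
    (A * B) i j = A i (j - 1) * B (j - 1) j + A i j * B j j := by
  rw [Matrix.mul_apply, Fintype.sum_eq_add _ _ (Fin.sub_one_ne_self j)]
  rintro k ⟨hk1, hk2⟩
  rw [hB k hk2 hk1, mul_zero]


/-- `j - 1` is computed in `Fin (n + 2)`, so the recurrence wraps around: `0 - 1 = Fin.last`. -/
def ColumnRecurrence (A : Matrix (Fin (n + 2)) (Fin (n + 2)) ℝ) : Prop :=
  ∀ i j, i ≠ j → A i j * A (j - 1) (j - 1) = A i (j - 1) * A (j - 1) j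

namespace ColumnRecurrence

variable {A : Matrix (Fin (n + 2)) (Fin (n + 2)) ℝ}

lemma mul_arc_nat (hrec : ColumnRecurrence A) (hdiag : ∀ i, A i i ≠ 0) (i : Fin (n + 2))
    (a : ℕ) : ∀ b : ℕ, a + b < n + 2 →
      A i (i + a + b) * A (i + a) (i + a) = A i (i + a) * A (i + a) (i + a + b)
  | 0, _ => by simp
  | b + 1, hab => by
    set j := i + a + ((b + 1 : ℕ) : Fin (n + 2))
    have hj : j - 1 = i + a + b := by
      simp only [j, Nat.cast_succ, ← add_assoc, add_sub_cancel_right]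
    have hij : i ≠ j := by
      simpa [j, add_assoc, eq_comm] using
        Fin.add_natCast_ne_self i (m := a + (b + 1)) (by omega) hab
    have hkj : i + a ≠ j := by
      simpa [j, eq_comm] using
        Fin.add_natCast_ne_self (i + (a : Fin (n + 2))) (m := b + 1) (by omega) (by omega)
    have ih := mul_arc_nat hrec hdiag i a b (by omega)
    have ei := hrec i j hij
    have ek := hrec (i + a) j hkj
    rw [hj] at ei ek
    refine mul_right_cancel₀ (hdiag (i + a + b)) ?_
    linear_combination A (i + a) (i + a) * ei + A (i + a + b) j * ih - A i (i + a) * ek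

lemma mul_arc (hrec : ColumnRecurrence A) (hdiag : ∀ i, A i i ≠ 0) {i k j : Fin (n + 2)}
    (h : ((k - i : Fin (n + 2)) : ℕ) + ((j - k : Fin (n + 2)) : ℕ) < n + 2) :
    A i j * A k k = A i k * A k j := by
  simpa [Fin.cast_val_eq_self] using hrec.mul_arc_nat hdiag i _ _ h

theorem invCyclic (hrec : ColumnRecurrence A) (hdiag : ∀ i, A i i ≠ 0) : InvCyclic A := by
  have arc : ∀ i k j : Fin (n + 2),
      ((k - i : Fin (n + 2)) : ℕ) + ((j - k : Fin (n + 2)) : ℕ) < n + 2 →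
      A i j = A i k * A k j / A k k := fun i k j h => by
    rw [eq_div_iff (hdiag k)]; exact hrec.mul_arc hdiag h
  refine ⟨hdiag, fun i k j hik hkj => arc i k j ?_, fun i j hji hi => arc i _ j ?_,
    fun j hj => arc _ 0 j ?_⟩
  · rw [Fin.coe_sub_iff_le.mpr hik.le, Fin.coe_sub_iff_le.mpr hkj.le]
    omega
  · have hil : i < Fin.last (n + 1) := lt_of_le_of_ne (Fin.le_last i) hi
    rw [Fin.coe_sub_iff_le.mpr hil.le, Fin.coe_sub_iff_lt.mpr (hji.trans hil)]
    simp only [Fin.val_last, Fin.lt_def] at hji ⊢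
    omega
  · rw [Fin.coe_sub_iff_lt.mpr (Fin.last_pos), Fin.coe_sub_iff_le.mpr (Fin.zero_le j)]
    simp only [Fin.val_last, Fin.val_zero, Fin.lt_def] at hj ⊢
    omega

lemma mul_prod_diag (hrec : ColumnRecurrence A) (i : Fin (n + 2)) :
    ∀ m ≤ n + 1, A i (i + m) * ∏ l ∈ Finset.range m, A (i + l) (i + l) =
      A i i * ∏ l ∈ Finset.range m, A (i + l) (i + l + 1)
  | 0, _ => by simp
  | m + 1, hm => by
    have hstep := hrec i (i + (m + 1 : ℕ)) (Fin.add_natCast_ne_self i (by omega) (by omega)).symm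
    simp only [Nat.cast_succ, ← add_assoc, add_sub_cancel_right] at hstep ⊢
    rw [Finset.prod_range_succ, Finset.prod_range_succ]
    linear_combination (∏ l ∈ Finset.range m, A (i + l) (i + l)) * hstep +
      A (i + m) (i + m + 1) * mul_prod_diag hrec i m (by omega)

lemma mul_mul_diagProd (hrec : ColumnRecurrence A) (j : Fin (n + 2)) :
    A j (j - 1) * A (j - 1) j * diagProd A = cycProd A * (A j j * A (j - 1) (j - 1)) := by
  have hprod := hrec.mul_prod_diag j (n + 1) le_rfl
  have hd :
      diagProd A = (∏ l ∈ Finset.range (n + 1), A (j + l) (j + l)) * A (j - 1) (j - 1) := by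
    rw [diagProd, ← prod_range_add_left (fun i => A i i) j, Finset.prod_range_succ,
      Fin.natCast_add_one_eq_neg_one, ← sub_eq_add_neg]
  have hc : cycProd A = (∏ l ∈ Finset.range (n + 1), A (j + l) (j + l + 1)) * A (j - 1) j := by
    rw [cycProd, ← prod_range_add_left (fun i => A i (i + 1)) j, Finset.prod_range_succ,
      Fin.natCast_add_one_eq_neg_one, ← sub_eq_add_neg, sub_add_cancel]
  rw [Fin.natCast_add_one_eq_neg_one, ← sub_eq_add_neg] at hprod
  rw [hd, hc]
  linear_combination A (j - 1) j * A (j - 1) (j - 1) * hprod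

end ColumnRecurrence

namespace InvCyclic

variable {A : Matrix (Fin (n + 2)) (Fin (n + 2)) ℝ}

lemma mul_of_le_of_lt (hic : InvCyclic A) {i k j : Fin (n + 2)} (hik : i ≤ k) (hkj : k < j) :
    A i j * A k k = A i k * A k j := by
  rcases hik.eq_or_lt with rfl | hik
  · ring
  · rw [hic.2.1 i k j hik hkj, div_mul_cancel₀ _ (hic.1 k)]

lemma mul_of_lt (hic : InvCyclic A) {i j : Fin (n + 2)} (hji : j < i) :
    A i j * (A (Fin.last (n + 1)) (Fin.last (n + 1)) * A 0 0) =
      A i (Fin.last (n + 1)) * (A (Fin.last (n + 1)) 0 * A 0 j) := by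
  have hll := hic.1 (Fin.last (n + 1))
  have h00 := hic.1 0
  rcases eq_or_ne i (Fin.last (n + 1)) with rfl | hi
  · rw [hic.2.2.2 j hji]
    field_simp
  · have hjl : j < Fin.last (n + 1) := hji.trans_le (Fin.le_last i)
    rw [hic.2.2.1 i j hji hi, hic.2.2.2 j hjl]
    field_simp

theorem columnRecurrence (hic : InvCyclic A) : ColumnRecurrence A := by
  have hll := hic.1 (Fin.last (n + 1))
  have h00 := hic.1 0
  intro i j hij
  rcases eq_or_ne j 0 with rfl | hj
  · have hi : 0 < i := Fin.pos_iff_ne_zero.mpr hij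
    rw [zero_sub, Fin.neg_one_eq_last]
    refine mul_right_cancel₀ h00 ?_
    linear_combination hic.mul_of_lt hi
  have hpj : j - 1 < j := by
    rw [Fin.lt_def, Fin.coe_sub_one, if_neg hj]
    exact Nat.sub_lt (Fin.pos_iff_ne_zero.mpr hj) one_pos
  rcases le_or_gt i (j - 1) with hip | hpi
  · exact hic.mul_of_le_of_lt hip hpj
  · have hji : j < i := by
      rw [Fin.lt_def, Fin.coe_sub_one, if_neg hj] at hpi
      exact lt_of_le_of_ne (Fin.le_def.mpr (by omega)) (Ne.symm hij)
    refine mul_right_cancel₀ (mul_ne_zero hll h00) ?_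
    linear_combination A (j - 1) (j - 1) * hic.mul_of_lt hji -
      A (j - 1) j * hic.mul_of_lt (hpj.trans hji) +
      A i (Fin.last (n + 1)) * A (Fin.last (n + 1)) 0 * hic.mul_of_le_of_lt (Fin.zero_le _) hpj

end InvCyclic

section Inverse

variable {A B : Matrix (Fin (n + 2)) (Fin (n + 2)) ℝ}

lemma diagProd_neg (hn : Odd (n + 2)) (hneg : ∀ i j, A i j < 0) : diagProd A < 0 :=
  prod_neg_of_odd_card (by rwa [Fintype.card_fin]) fun i => hneg i i

theorem columnRecurrence_of_mul_eq_one (hAB : A * B = 1) (hB : Bdsw B) : ColumnRecurrence A := by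
  obtain ⟨hdiag, -, hzero⟩ := bdsw_iff.mp hB
  intro i j hij
  have hcol : ∀ k, k ≠ j → A k (j - 1) * B (j - 1) j + A k j * B j j = 0 := fun k hk => by
    rw [← mul_apply_eq_of_col_support A B k j (hzero · j), hAB, Matrix.one_apply_ne hk]
  refine mul_right_cancel₀ (hdiag j) ?_
  linear_combination A (j - 1) (j - 1) * hcol i hij - A i (j - 1) * hcol _ (Fin.sub_one_ne_self j)

theorem diagProd_sub_cycProd_pos_of_mul_eq_one (hn : Odd (n + 2)) (hAB : A * B = 1)
    (hB : Bdsw B) (hZ : ∀ i j, i ≠ j → B i j ≤ 0) (hneg : ∀ i j, A i j < 0) :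
    0 < diagProd A - cycProd A := by
  obtain ⟨hdiag, hsub, hzero⟩ := bdsw_iff.mp hB
  have hcol : ∀ k, A k (0 - 1) * B (0 - 1) 0 + A k 0 * B 0 0 = if k = 0 then 1 else 0 :=
    fun k => by rw [← mul_apply_eq_of_col_support A B k 0 (hzero · 0), hAB, Matrix.one_apply]
  have h1 := hcol 0
  have h2 := hcol (0 - 1)
  rw [if_pos rfl] at h1
  rw [if_neg (Fin.sub_one_ne_self 0)] at h2
  have hpair := (columnRecurrence_of_mul_eq_one hAB hB).mul_mul_diagProd 0
  have hB0 : B (0 - 1) 0 < 0 := lt_of_le_of_ne (hZ _ _ (Fin.sub_one_ne_self 0)) (hsub 0)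
  have hB00 : 0 < B 0 0 := pos_of_mul_neg_right
    (by linarith [mul_pos_of_neg_of_neg (hneg (0 - 1) (0 - 1)) hB0]) (hneg (0 - 1) 0).le
  have key : (diagProd A - cycProd A) * (B 0 0 * A 0 0) = diagProd A := by
    refine mul_right_cancel₀ (hneg (0 - 1) (0 - 1)).ne ?_
    linear_combination diagProd A * A (0 - 1) (0 - 1) * h1 - diagProd A * A 0 (0 - 1) * h2 +
      B 0 0 * hpair
  exact pos_of_mul_neg_left (by rw [key]; exact diagProd_neg hn hneg)
    (mul_neg_of_pos_of_neg hB00 (hneg 0 0)).le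

/-- The inverse of `A` when `ColumnRecurrence A` and `d ≠ c`: the ratio `b_{j-1,j} / b_{jj}` is
forced by the entry `(j - 1, j)` of `AB = 1`, the scale by the entry `(j, j)`. -/
noncomputable def cyclicInv (A : Matrix (Fin (n + 2)) (Fin (n + 2)) ℝ) :
    Matrix (Fin (n + 2)) (Fin (n + 2)) ℝ :=
  of fun i j =>
    if i = j then diagProd A / ((diagProd A - cycProd A) * A i i)
    else if i = j - 1 then -(diagProd A * A i j) / ((diagProd A - cycProd A) * (A i i * A j j))
    else 0

lemma cyclicInv_apply_self (j : Fin (n + 2)) :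
    cyclicInv A j j = diagProd A / ((diagProd A - cycProd A) * A j j) := by
  simp [cyclicInv]

lemma cyclicInv_apply_sub_one (j : Fin (n + 2)) :
    cyclicInv A (j - 1) j =
      -(diagProd A * A (j - 1) j) / ((diagProd A - cycProd A) * (A (j - 1) (j - 1) * A j j)) := by
  simp [cyclicInv]

lemma cyclicInv_apply_of_ne {k j : Fin (n + 2)} (hkj : k ≠ j) (hk : k ≠ j - 1) :
    cyclicInv A k j = 0 := by
  simp [cyclicInv, hkj, hk]

theorem mul_cyclicInv (hrec : ColumnRecurrence A) (hdiag : ∀ i, A i i ≠ 0)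
    (hdc : diagProd A - cycProd A ≠ 0) : A * cyclicInv A = 1 := by
  ext i j
  rw [mul_apply_eq_of_col_support A _ i j fun k => cyclicInv_apply_of_ne, cyclicInv_apply_self,
    cyclicInv_apply_sub_one, Matrix.one_apply]
  have hp := hdiag (j - 1)
  have hj := hdiag j
  split_ifs with hij
  · subst hij
    field_simp
    linear_combination -hrec.mul_mul_diagProd i
  · field_simp
    linear_combination diagProd A * hrec i j hij

lemma cyclicInv_nonpos (hneg : ∀ i j, A i j < 0) (hd : diagProd A < 0)
    (hdc : 0 < diagProd A - cycProd A) {i j : Fin (n + 2)} (hij : i ≠ j) :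
    cyclicInv A i j ≤ 0 := by
  rcases eq_or_ne i (j - 1) with rfl | hi
  · rw [cyclicInv_apply_sub_one]
    refine div_nonpos_of_nonpos_of_nonneg ?_ ?_
    · exact neg_nonpos.mpr (mul_pos_of_neg_of_neg hd (hneg _ _)).le
    · exact (mul_pos hdc (mul_pos_of_neg_of_neg (hneg _ _) (hneg _ _))).le
  · rw [cyclicInv_apply_of_ne hij hi]

lemma bdsw_cyclicInv (hne : ∀ i j, A i j ≠ 0) (hd : diagProd A ≠ 0)
    (hdc : diagProd A - cycProd A ≠ 0) : Bdsw (cyclicInv A) := by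
  refine bdsw_iff.mpr ⟨fun j => ?_, fun j => ?_, fun k j => cyclicInv_apply_of_ne⟩
  · rw [cyclicInv_apply_self]
    exact div_ne_zero hd (mul_ne_zero hdc (hne j j))
  · rw [cyclicInv_apply_sub_one]
    exact div_ne_zero (neg_ne_zero.mpr (mul_ne_zero hd (hne _ _)))
      (mul_ne_zero hdc (mul_ne_zero (hne _ _) (hne _ _)))

end Inverse

end Cyclic

theorem stmt12 {n : ℕ} (hn : Odd (n + 2)) (A : Matrix (Fin (n + 2)) (Fin (n + 2)) ℝ) :
    (A.det ≠ 0 ∧ (∀ i j, i ≠ j → A⁻¹ i j ≤ 0) ∧ (∀ i j, A i j < 0) ∧ Bdsw A⁻¹) ↔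
    ((∀ i j, A i j < 0) ∧ InvCyclic A ∧ 0 < diagProd A - cycProd A) := by
  constructor
  · rintro ⟨hdet, hZ, hneg, hB⟩
    have hAB : A * A⁻¹ = 1 := A.mul_nonsing_inv (isUnit_iff_ne_zero.mpr hdet)
    exact ⟨hneg, (columnRecurrence_of_mul_eq_one hAB hB).invCyclic fun i => (hneg i i).ne,
      diagProd_sub_cycProd_pos_of_mul_eq_one hn hAB hB hZ hneg⟩
  · rintro ⟨hneg, hic, hdc⟩
    have hd := diagProd_neg hn hneg
    have hAB := mul_cyclicInv hic.columnRecurrence hic.1 hdc.ne'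
    rw [Matrix.inv_eq_right_inv hAB]
    exact ⟨isUnit_iff_ne_zero.mp (Matrix.isUnit_det_of_right_inverse hAB),
      fun i j => cyclicInv_nonpos hneg hd hdc, hneg,
      bdsw_cyclicInv (fun i j => (hneg i j).ne) hd.ne hdc.ne'⟩
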